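/- arXiv:1802.03703 — 2 statements merged into one kernel-verified Lean document; each statement's English description precedes it below -/
import Mathlib

section
/- For every n ≥ 2 and every T > 0 there exists an n×n real symmetric positive definite matrix A such that for every probability vector p (p_i > 0, Σ_i p_i = 1) one has λ_min(W(p)) ≤ 1/T, where W(p) := A^{1/2} Diag(p_1/A_{11}, …, p_n/A_{nn}) A^{1/2}. -/
open Matrix BigOperators Finset

noncomputable def PosSemidef.oldSqrt {n : ℕ} {A : Matrix (Fin n) (Fin n) ℝ} (hA : A.PosSemidef) :
    Matrix (Fin n) (Fin n) ℝ :=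
  (hA.1.eigenvectorUnitary : Matrix (Fin n) (Fin n) ℝ) *
    diagonal (fun i => Real.sqrt (hA.1.eigenvalues i)) *
    (star hA.1.eigenvectorUnitary : Matrix (Fin n) (Fin n) ℝ)

theorem PosSemidef.oldSqrt_conjTranspose {n : ℕ} {A : Matrix (Fin n) (Fin n) ℝ}
    (hA : A.PosSemidef) : (PosSemidef.oldSqrt hA)ᴴ = PosSemidef.oldSqrt hA := by
  unfold PosSemidef.oldSqrt
  simp only [conjTranspose_mul, star_eq_conjTranspose, conjTranspose_conjTranspose,
    diagonal_conjTranspose, star_trivial, Matrix.mul_assoc]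

theorem PosSemidef.oldSqrt_mul_self {n : ℕ} {A : Matrix (Fin n) (Fin n) ℝ}
    (hA : A.PosSemidef) : PosSemidef.oldSqrt hA * PosSemidef.oldSqrt hA = A := by
  unfold PosSemidef.oldSqrt
  have hU : (star hA.1.eigenvectorUnitary : Matrix (Fin n) (Fin n) ℝ) *
      (hA.1.eigenvectorUnitary : Matrix (Fin n) (Fin n) ℝ) = 1 :=
    Unitary.coe_star_mul_self _
  have hD : diagonal (fun i => Real.sqrt (hA.1.eigenvalues i)) *
      diagonal (fun i => Real.sqrt (hA.1.eigenvalues i)) =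
      diagonal (RCLike.ofReal ∘ hA.1.eigenvalues) := by
    rw [diagonal_mul_diagonal]
    congr 1
    funext i
    simp [Real.mul_self_sqrt (hA.eigenvalues_nonneg i)]
  conv_rhs => rw [hA.1.spectral_theorem, Unitary.conjStarAlgAut_apply]
  rw [← hD]
  simp only [Matrix.mul_assoc]
  rw [← Matrix.mul_assoc (star _ : Matrix (Fin n) (Fin n) ℝ) (_ : Matrix (Fin n) (Fin n) ℝ), hU,
    Matrix.one_mul]

/-- The iteration matrix `W(p) = A^{1/2} Diag(p_i / A_{ii}) A^{1/2}` of randomized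
coordinate descent with probabilities `p`. -/
noncomputable def Wrcd {n : ℕ} (A : Matrix (Fin n) (Fin n) ℝ) (hA : A.PosDef)
    (p : Fin n → ℝ) : Matrix (Fin n) (Fin n) ℝ :=
  PosSemidef.oldSqrt hA.posSemidef * Matrix.diagonal (fun i => p i / A i i) * PosSemidef.oldSqrt hA.posSemidef

set_option maxHeartbeats 1000000 in
theorem stmt8 (n : ℕ) (hn : 2 ≤ n) (T : ℝ) (hT : 0 < T) :
    ∃ (A : Matrix (Fin n) (Fin n) ℝ) (hA : A.PosDef),
      ∀ (p : Fin n → ℝ), (∀ i, 0 < p i) → (∑ i, p i) = 1 →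
        ∀ hW : (Wrcd A hA p).IsHermitian,
          (⨅ i, hW.eigenvalues i) ≤ 1 / T := by
  -- parameters
  set ε : ℝ := min (1/2) ((1/(2*T))^n) with hε_def
  have hεpos : 0 < ε := lt_min (by norm_num) (pow_pos (by positivity) n)
  have hεle : ε ≤ 1/2 := min_le_left _ _
  have hεleT : ε ≤ (1/(2*T))^n := min_le_right _ _
  set s : ℝ := (1 - ε)/2 with hs_def
  have hs_pos : 0 < s := by
    have : ε < 1 := lt_of_le_of_lt hεle (by norm_num)
    simp only [hs_def]; linarith
  have hs_lt : s < 1/2 := by simp only [hs_def]; linarith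
  have h12s : 1 - 2*s = ε := by simp only [hs_def]; ring
  -- indices
  have h0 : (0:ℕ) < n := by omega
  have h1 : (1:ℕ) < n := by omega
  set i0 : Fin n := ⟨0, h0⟩ with hi0
  set i1 : Fin n := ⟨1, h1⟩ with hi1
  have hi01 : i0 ≠ i1 := by simp [hi0, hi1, Fin.ext_iff]
  have hi10 : i1 ≠ i0 := Ne.symm hi01
  -- the vector and matrix
  set v : Fin n → ℝ := fun i => if i = i0 then 1 else if i = i1 then -1 else 0 with hv
  set A : Matrix (Fin n) (Fin n) ℝ := 1 + Matrix.replicateCol Unit ((-s) • v) * Matrix.replicateRow Unit v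
    with hAdef
  have hA_entry : ∀ i j, A i j = (if i = j then 1 else 0) - s * (v i * v j) := by
    intro i j
    simp [hAdef, Matrix.add_apply, Matrix.mul_apply, Matrix.replicateCol_apply, Matrix.replicateRow_apply,
      Matrix.one_apply]
    ring
  have hvsq : ∀ i, v i * v i ≤ 1 := by
    intro i
    by_cases h0' : i = i0 <;> by_cases h1' : i = i1 <;> simp [hv, h0', h1', hi10] <;> norm_num
  have hAdiag : ∀ i, 1 - s ≤ A i i := by
    intro i
    rw [hA_entry, if_pos rfl]
    nlinarith [hvsq i, mul_self_nonneg (v i), hs_pos]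
  have hAdiag_half : ∀ i, (1:ℝ)/2 < A i i := fun i => lt_of_lt_of_le (by linarith) (hAdiag i)
  -- sum identity
  have hsumv : ∀ x : Fin n → ℝ, ∑ i, v i * x i = x i0 - x i1 := by
    intro x
    have key : ∀ i, v i * x i =
        (if i = i0 then x i0 else 0) - (if i = i1 then x i1 else 0) := by
      intro i
      by_cases h0' : i = i0 <;> by_cases h1' : i = i1
      · exact absurd (h0' ▸ h1') hi01
      · simp [hv, h0', h1', hi01, hi10]
      · simp [hv, h0', h1', hi01, hi10]
      · simp [hv, h0', h1', hi01, hi10]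
    rw [Finset.sum_congr rfl (fun i _ => key i), Finset.sum_sub_distrib]
    simp
  have hvv : ∑ i, v i * v i = 2 := by
    rw [hsumv v]
    simp [hv, hi10]
    norm_num
  -- mulVec formula
  have hmulVec : ∀ (x : Fin n → ℝ) (i : Fin n),
      (A *ᵥ x) i = x i - s * v i * (x i0 - x i1) := by
    intro x i
    have h : (A *ᵥ x) i = ∑ j, ((if i = j then (1:ℝ) else 0) - s * (v i * v j)) * x j := by
      unfold Matrix.mulVec dotProduct
      exact Finset.sum_congr rfl (fun j _ => by simp only [hA_entry])
    rw [h]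
    have expand : ∀ j, ((if i = j then (1:ℝ) else 0) - s * (v i * v j)) * x j =
        (if j = i then x j else 0) - (s * v i) * (v j * x j) := by
      intro j
      by_cases hij : i = j <;> simp [hij, eq_comm] <;> ring
    rw [Finset.sum_congr rfl (fun j _ => expand j), Finset.sum_sub_distrib, ← Finset.mul_sum,
      hsumv x]
    simp
  -- positive definiteness of A
  have hAposdef : A.PosDef := by
    rw [Matrix.posDef_iff_dotProduct_mulVec]
    constructor
    · show Aᴴ = A
      ext i j
      simp only [conjTranspose_apply, star_trivial]
      rw [hA_entry, hA_entry]
      by_cases h : i = j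
      · subst h; ring
      · rw [if_neg h, if_neg (Ne.symm h)]; ring
    · intro x hx
      simp only [star_trivial]
      have hq : dotProduct x (A *ᵥ x) =
          (∑ i, x i * x i) - s * (x i0 - x i1)^2 := by
        unfold dotProduct
        have step : ∀ i, x i * (A *ᵥ x) i =
            x i * x i - (s * (x i0 - x i1)) * (v i * x i) := by
          intro i; rw [hmulVec]; ring
        rw [Finset.sum_congr rfl (fun i _ => step i), Finset.sum_sub_distrib,
          ← Finset.mul_sum, hsumv x]
        ring
      have hge2 : x i0 * x i0 + x i1 * x i1 ≤ ∑ i, x i * x i := by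
        have h := Finset.sum_le_sum_of_subset_of_nonneg
          (Finset.subset_univ ({i0, i1} : Finset (Fin n)))
          (fun i _ _ => mul_self_nonneg (x i))
        rwa [Finset.sum_pair hi01] at h
      by_cases hx0 : x i0 = 0
      · by_cases hx1 : x i1 = 0
        · obtain ⟨j, hj⟩ := Function.ne_iff.mp hx
          have hgej : x j * x j ≤ ∑ i, x i * x i := by
            have h := Finset.sum_le_sum_of_subset_of_nonneg
              (Finset.subset_univ ({j} : Finset (Fin n)))
              (fun i _ _ => mul_self_nonneg (x i))
            rwa [Finset.sum_singleton] at h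
          have : 0 < x j * x j := mul_self_pos.mpr hj
          rw [hq, hx0, hx1]
          simp only [sub_zero]
          nlinarith
        · rw [hq]
          nlinarith [mul_self_pos.mpr hx1, mul_self_nonneg (x i0),
            sq_nonneg (x i0 + x i1)]
      · rw [hq]
        nlinarith [mul_self_pos.mpr hx0, mul_self_nonneg (x i1),
          sq_nonneg (x i0 + x i1)]
  refine ⟨A, hAposdef, ?_⟩
  intro p hp hps hW
  have hple : ∀ i, p i ≤ 1 := by
    intro i
    rw [← hps]
    exact Finset.single_le_sum (fun j _ => (hp j).le) (Finset.mem_univ i)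
  -- determinant of A
  have hdetA : A.det = 1 - 2*s := by
    rw [hAdef, Matrix.det_one_add_replicateCol_mul_replicateRow]
    have h : v ⬝ᵥ ((-s) • v) = -s * ∑ i, v i * v i := by
      unfold dotProduct
      rw [Finset.mul_sum]
      exact Finset.sum_congr rfl (fun i _ => by simp [smul_eq_mul]; ring)
    rw [h, hvv]
    ring
  -- W is PosSemidef
  have hDpsd : (Matrix.diagonal (fun i => p i / A i i)).PosSemidef :=
    posSemidef_diagonal_iff.mpr
      (fun i => div_nonneg (hp i).le (by linarith [hAdiag_half i]))
  have hWpsd : (Wrcd A hAposdef p).PosSemidef := by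
    have h := hDpsd.conjTranspose_mul_mul_same (PosSemidef.oldSqrt hAposdef.posSemidef)
    unfold Wrcd
    rwa [PosSemidef.oldSqrt_conjTranspose hAposdef.posSemidef] at h
  -- eigenvalue facts
  haveI : Nonempty (Fin n) := ⟨i0⟩
  have heignn : ∀ i, 0 ≤ hW.eigenvalues i := fun i => hWpsd.eigenvalues_nonneg i
  set m := ⨅ i, hW.eigenvalues i with hm
  have hbdd : BddBelow (Set.range hW.eigenvalues) :=
    Set.Finite.bddBelow (Set.finite_range _)
  have hmle : ∀ i, m ≤ hW.eigenvalues i := fun i => ciInf_le hbdd i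
  have hmnn : 0 ≤ m := le_ciInf heignn
  -- determinant of W
  have hdetW : (Wrcd A hAposdef p).det = (1 - 2*s) * ∏ i, (p i / A i i) := by
    unfold Wrcd
    rw [Matrix.det_mul, Matrix.det_mul, Matrix.det_diagonal]
    have hss : (PosSemidef.oldSqrt hAposdef.posSemidef).det * (PosSemidef.oldSqrt hAposdef.posSemidef).det = A.det := by
      rw [← Matrix.det_mul, PosSemidef.oldSqrt_mul_self hAposdef.posSemidef]
    calc (PosSemidef.oldSqrt hAposdef.posSemidef).det * (∏ i, (p i / A i i)) * (PosSemidef.oldSqrt hAposdef.posSemidef).det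
        = ((PosSemidef.oldSqrt hAposdef.posSemidef).det * (PosSemidef.oldSqrt hAposdef.posSemidef).det) *
            ∏ i, (p i / A i i) := by ring
      _ = A.det * ∏ i, (p i / A i i) := by rw [hss]
      _ = (1 - 2*s) * ∏ i, (p i / A i i) := by rw [hdetA]
  have hprodeig : ∏ i, hW.eigenvalues i = (Wrcd A hAposdef p).det := by
    rw [hW.det_eq_prod_eigenvalues]
    norm_num
  have hpow : m ^ n ≤ ∏ i, hW.eigenvalues i := by
    have h := Finset.prod_le_prod (s := Finset.univ) (f := fun _ : Fin n => m)
      (g := hW.eigenvalues) (fun i _ => hmnn) (fun i _ => hmle i)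
    simpa [Finset.prod_const, Finset.card_univ] using h
  -- product bounds
  have hprodp : ∏ i, p i ≤ 1 :=
    Finset.prod_le_one (fun i _ => (hp i).le) (fun i _ => hple i)
  have hprodnn : 0 ≤ ∏ i, p i := Finset.prod_nonneg (fun i _ => (hp i).le)
  have hprodbd : ∏ i, (p i / A i i) ≤ 2^n * ∏ i, p i := by
    calc ∏ i, (p i / A i i) ≤ ∏ i, (2 * p i) := by
          refine Finset.prod_le_prod (fun i _ => div_nonneg (hp i).le
            (by linarith [hAdiag_half i])) (fun i _ => ?_)
          have h := hAdiag_half i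
          rw [div_le_iff₀ (by linarith)]
          nlinarith [hp i]
      _ = 2^n * ∏ i, p i := by
          rw [Finset.prod_mul_distrib, Finset.prod_const, Finset.card_univ,
            Fintype.card_fin]
  -- final chain
  have hfin : m ^ n ≤ (1/T)^n := by
    have h2n : (0:ℝ) ≤ 2^n := by positivity
    calc m ^ n ≤ ∏ i, hW.eigenvalues i := hpow
      _ = (1 - 2*s) * ∏ i, (p i / A i i) := by rw [hprodeig, hdetW]
      _ ≤ (1 - 2*s) * (2^n * ∏ i, p i) := by
          rw [h12s]
          exact mul_le_mul_of_nonneg_left hprodbd hεpos.le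
      _ ≤ ε * (2^n * 1) := by
          rw [h12s]
          exact mul_le_mul_of_nonneg_left
            (mul_le_mul_of_nonneg_left hprodp h2n) hεpos.le
      _ ≤ (1/(2*T))^n * 2^n := by
          rw [mul_one]
          exact mul_le_mul_of_nonneg_right hεleT h2n
      _ = (1/T)^n := by
          rw [← mul_pow]
          congr 1
          field_simp
  exact le_of_pow_le_pow_left₀ (by omega) (by positivity) hfin
end

section
/- Let n ≥ 2, let v_1, …, v_n ∈ ℝⁿ satisfy v_iᵀ A v_i = 1 for all i and |v_iᵀ A v_j| ≤ ε for all i ≠ j, and suppose ε < 1/(n−1). Let S := [v_1, …, v_n] be the matrix with columns v_i. Then Sᵀ A S is positive definite, and the eigenvalues of A^{1/2} S Sᵀ A^{1/2} satisfy λ_min(A^{1/2} S Sᵀ A^{1/2}) ≥ 1 − ε(n−1)·(1 + ε(n−1))/(1 − ε(n−1)) and λ_max(A^{1/2} S Sᵀ A^{1/2}) ≤ 1 + ε(n−1)·(1 + ε(n−1))/(1 − ε(n−1)). -/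
open Matrix BigOperators Finset

open scoped ComplexOrder in
/-- The square root of a positive semidefinite matrix, as `Matrix.PosSemidef.sqrt` was defined in
Mathlib of December 2024 (removed since). -/
noncomputable def Matrix.PosSemidef.sqrt {n 𝕜 : Type*} [Fintype n] [RCLike 𝕜] [DecidableEq n]
    {A : Matrix n n 𝕜} (hA : A.PosSemidef) : Matrix n n 𝕜 :=
  hA.1.eigenvectorUnitary.1 * diagonal ((↑) ∘ (√·) ∘ hA.1.eigenvalues) *
    (star hA.1.eigenvectorUnitary : Matrix n n 𝕜)

theorem stmt16 {n : ℕ} (hn : 2 ≤ n) (A : Matrix (Fin n) (Fin n) ℝ) (hA : A.PosDef)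
    (v : Fin n → Fin n → ℝ) (ε : ℝ)
    (hdiag : ∀ i, v i ⬝ᵥ A *ᵥ v i = 1)
    (hoff : ∀ i j, i ≠ j → |v i ⬝ᵥ A *ᵥ v j| ≤ ε)
    (hε : ε < 1 / ((n : ℝ) - 1))
    (S : Matrix (Fin n) (Fin n) ℝ) (hS : S = (Matrix.of v)ᵀ) :
    (Sᵀ * A * S).PosDef ∧
      ∀ hB : (hA.posSemidef.sqrt * (S * Sᵀ) * hA.posSemidef.sqrt).IsHermitian,
        1 - ε * ((n : ℝ) - 1) * (1 + ε * ((n : ℝ) - 1)) / (1 - ε * ((n : ℝ) - 1)) ≤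
            (⨅ i, hB.eigenvalues i) ∧
          (⨆ i, hB.eigenvalues i) ≤
            1 + ε * ((n : ℝ) - 1) * (1 + ε * ((n : ℝ) - 1)) / (1 - ε * ((n : ℝ) - 1)) := by
  haveI : NeZero n := ⟨by omega⟩
  have hn1 : (1:ℝ) ≤ (n:ℝ) - 1 := by
    have : (2:ℝ) ≤ (n:ℝ) := by exact_mod_cast hn
    linarith
  set δ : ℝ := ε * ((n:ℝ) - 1) with hδdef
  have hε0 : 0 ≤ ε :=
    le_trans (abs_nonneg _)
      (hoff ⟨0, by omega⟩ ⟨1, by omega⟩ (by simp [Fin.ext_iff]))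
  have hδ0 : 0 ≤ δ := mul_nonneg hε0 (by linarith)
  have hδ1 : δ < 1 := by
    have h0 : (0:ℝ) < (n:ℝ) - 1 := by linarith
    calc δ = ε * ((n:ℝ) - 1) := rfl
    _ < (1 / ((n:ℝ)-1)) * ((n:ℝ)-1) := by
        exact mul_lt_mul_of_pos_right hε h0
    _ = 1 := by field_simp
  -- Gram matrix entries
  have hG : ∀ i j, (Sᵀ * A * S) i j = v i ⬝ᵥ A *ᵥ v j := by
    intro i j
    subst hS
    simp only [Matrix.mul_apply, transpose_apply, transpose_transpose, Matrix.of_apply,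
      dotProduct, mulVec]
    simp only [dotProduct, Finset.sum_mul, Finset.mul_sum]
    rw [Finset.sum_comm]
    apply Finset.sum_congr rfl
    intro k _
    apply Finset.sum_congr rfl
    intro l _
    ring
  -- quadratic form bound
  have hquad : ∀ x : Fin n → ℝ, |x ⬝ᵥ ((Sᵀ * A * S) *ᵥ x) - x ⬝ᵥ x| ≤ δ * (x ⬝ᵥ x) := by
    intro x
    have hQ : x ⬝ᵥ x = ∑ i, x i ^ 2 := by
      simp [dotProduct, sq]
    have hxpand : x ⬝ᵥ ((Sᵀ * A * S) *ᵥ x) =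
        ∑ i, ∑ j, x i * ((Sᵀ * A * S) i j * x j) := by
      simp [dotProduct, mulVec, Finset.mul_sum]
    have hsplit : ∀ i : Fin n, ∑ j, x i * ((Sᵀ * A * S) i j * x j)
        = x i ^ 2 + ∑ j ∈ univ.erase i, x i * ((Sᵀ * A * S) i j * x j) := by
      intro i
      rw [← Finset.add_sum_erase _ _ (Finset.mem_univ i), hG, hdiag]
      ring_nf
    have hdiff : x ⬝ᵥ ((Sᵀ * A * S) *ᵥ x) - x ⬝ᵥ x
        = ∑ i, ∑ j ∈ univ.erase i, x i * ((Sᵀ * A * S) i j * x j) := by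
      rw [hxpand, hQ]
      rw [Finset.sum_congr rfl (fun i _ => hsplit i), Finset.sum_add_distrib]
      ring
    rw [hdiff]
    have habs : |∑ i, ∑ j ∈ univ.erase i, x i * ((Sᵀ * A * S) i j * x j)|
        ≤ ∑ i, ∑ j ∈ univ.erase i, |x i| * (ε * |x j|) := by
      refine (Finset.abs_sum_le_sum_abs _ _).trans ?_
      refine Finset.sum_le_sum fun i _ => ?_
      refine (Finset.abs_sum_le_sum_abs _ _).trans ?_
      refine Finset.sum_le_sum fun j hj => ?_
      rw [abs_mul, abs_mul, hG]
      have := hoff i j (fun h => (Finset.mem_erase.mp hj).1 h.symm)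
      exact mul_le_mul_of_nonneg_left (mul_le_mul_of_nonneg_right this (abs_nonneg _)) (abs_nonneg _)
    refine habs.trans ?_
    have hrw : ∑ i, ∑ j ∈ univ.erase i, |x i| * (ε * |x j|)
        = ε * ((∑ i, |x i|) ^ 2 - ∑ i, |x i| ^ 2) := by
      have : ∀ i : Fin n, ∑ j ∈ univ.erase i, |x i| * (ε * |x j|)
          = ε * (|x i| * (∑ j, |x j|) - |x i| ^ 2) := by
        intro i
        have e1 : ∑ j ∈ univ.erase i, |x i| * (ε * |x j|)
            = |x i| * ε * ∑ j ∈ univ.erase i, |x j| := by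
          rw [Finset.mul_sum]
          exact Finset.sum_congr rfl fun j _ => by ring
        have e2 : ∑ j ∈ univ.erase i, |x j| = (∑ j, |x j|) - |x i| := by
          have := Finset.add_sum_erase univ (fun j => |x j|) (Finset.mem_univ i)
          linarith
        rw [e1, e2]
        ring
      rw [Finset.sum_congr rfl (fun i _ => this i), ← Finset.mul_sum]
      congr 1
      rw [Finset.sum_sub_distrib, ← Finset.sum_mul, sq]
    rw [hrw, hQ]
    have hcs : (∑ i, |x i|) ^ 2 ≤ (n:ℝ) * ∑ i, |x i| ^ 2 := by
      have := sq_sum_le_card_mul_sum_sq (s := (univ : Finset (Fin n))) (f := fun i => |x i|)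
      simpa using this
    have hsq : ∑ i, |x i| ^ 2 = ∑ i, x i ^ 2 := by
      exact Finset.sum_congr rfl fun i _ => sq_abs _
    have hQ0 : 0 ≤ ∑ i, x i ^ 2 := Finset.sum_nonneg fun i _ => sq_nonneg _
    rw [hδdef]
    nlinarith [hcs, hsq, hQ0]
  -- positive definiteness
  have hGsym : (Sᵀ * A * S).IsHermitian := by
    have := Matrix.isHermitian_conjTranspose_mul_mul S hA.isHermitian
    simpa using this
  have hxx : ∀ x : Fin n → ℝ, x ≠ 0 → 0 < x ⬝ᵥ x := by
    intro x hx
    have h0 : 0 ≤ x ⬝ᵥ x := by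
      rw [show x ⬝ᵥ x = ∑ i, x i * x i from rfl]
      exact Finset.sum_nonneg fun i _ => mul_self_nonneg _
    rcases h0.lt_or_eq with h | h
    · exact h
    · exact absurd (dotProduct_self_eq_zero.mp h.symm) hx
  have hPD : (Sᵀ * A * S).PosDef := by
    refine posDef_iff_dotProduct_mulVec.mpr ⟨hGsym, fun x hx => ?_⟩
    have h1 := hquad x
    have h2 := hxx x hx
    have h3 : -(δ * (x ⬝ᵥ x)) ≤ x ⬝ᵥ ((Sᵀ * A * S) *ᵥ x) - x ⬝ᵥ x := (abs_le.mp h1).1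
    have : (0:ℝ) < x ⬝ᵥ ((Sᵀ * A * S) *ᵥ x) := by nlinarith
    simpa using this
  refine ⟨hPD, fun hB => ?_⟩
  -- invertibility of S and sqrt A
  set R : Matrix (Fin n) (Fin n) ℝ := hA.posSemidef.sqrt with hRdef
  have hRR : R * R = A := by
    have hU := Unitary.coe_star_mul_self hA.posSemidef.1.eigenvectorUnitary
    conv_rhs => rw [hA.posSemidef.1.spectral_theorem]
    rw [hRdef, Matrix.PosSemidef.sqrt, Unitary.conjStarAlgAut_apply]
    set U := hA.posSemidef.1.eigenvectorUnitary
    simp only [Matrix.mul_assoc]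
    rw [← Matrix.mul_assoc (star (U : Matrix (Fin n) (Fin n) ℝ)) (U : Matrix (Fin n) (Fin n) ℝ), hU,
      Matrix.one_mul, ← Matrix.mul_assoc (diagonal _) (diagonal _), diagonal_mul_diagonal]
    congr 3
    funext j
    simp only [Function.comp_apply, RCLike.ofReal_real_eq_id, id]
    exact Real.mul_self_sqrt (hA.posSemidef.eigenvalues_nonneg j)
  have hdetA : A.det ≠ 0 := hA.det_pos.ne'
  have hdetG : (Sᵀ * A * S).det ≠ 0 := hPD.det_pos.ne'
  have hdetS : S.det ≠ 0 := by
    intro h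
    apply hdetG
    rw [Matrix.det_mul, Matrix.det_mul, h, mul_zero]
  have hdetR : R.det ≠ 0 := by
    intro h
    apply hdetA
    rw [← hRR, Matrix.det_mul, h, mul_zero]
  have hinjS : Function.Injective (Sᵀ).mulVec := by
    rw [Matrix.mulVec_injective_iff_isUnit, Matrix.isUnit_iff_isUnit_det,
      Matrix.det_transpose, isUnit_iff_ne_zero]
    exact hdetS
  have hinjR : Function.Injective R.mulVec := by
    rw [Matrix.mulVec_injective_iff_isUnit, Matrix.isUnit_iff_isUnit_det, isUnit_iff_ne_zero]
    exact hdetR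
  -- eigenvalue bounds
  have hbound : ∀ i, 1 - δ ≤ hB.eigenvalues i ∧ hB.eigenvalues i ≤ 1 + δ := by
    intro i
    set μ : ℝ := hB.eigenvalues i with hμdef
    set u : Fin n → ℝ := ⇑(hB.eigenvectorBasis i) with hudef
    have hu : (R * (S * Sᵀ) * R) *ᵥ u = μ • u := hB.mulVec_eigenvectorBasis i
    have hune : u ≠ 0 := by
      intro h
      have := hB.eigenvectorBasis.orthonormal.ne_zero i
      apply this
      ext j
      have : u j = 0 := by rw [h]; rfl
      exact this
    set w : Fin n → ℝ := (Sᵀ * R) *ᵥ u with hwdef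
    have hwne : w ≠ 0 := by
      intro h
      apply hune
      have h1 : Sᵀ *ᵥ (R *ᵥ u) = 0 := by
        rw [Matrix.mulVec_mulVec]; exact h
      have h2 : R *ᵥ u = 0 := by
        apply hinjS
        rw [h1, Matrix.mulVec_zero]
      apply hinjR
      rw [h2, Matrix.mulVec_zero]
    have key : Sᵀ * A * S * (Sᵀ * R) = (Sᵀ * R) * (R * (S * Sᵀ) * R) := by
      rw [← hRR]
      simp only [Matrix.mul_assoc]
    have hGw : (Sᵀ * A * S) *ᵥ w = μ • w := by
      rw [hwdef, Matrix.mulVec_mulVec, key, ← Matrix.mulVec_mulVec, hu,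
        Matrix.mulVec_smul]
    have hray : w ⬝ᵥ ((Sᵀ * A * S) *ᵥ w) = μ * (w ⬝ᵥ w) := by
      rw [hGw, dotProduct_smul, smul_eq_mul]
    have hp : 0 < w ⬝ᵥ w := hxx w hwne
    have h1 := hquad w
    rw [hray] at h1
    have h2 := abs_le.mp h1
    constructor
    · nlinarith [h2.1]
    · nlinarith [h2.2]
  haveI : Nonempty (Fin n) := ⟨⟨0, by omega⟩⟩
  have hfrac : δ ≤ δ * (1 + δ) / (1 - δ) := by
    rw [le_div_iff₀ (by linarith : (0:ℝ) < 1 - δ)]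
    nlinarith
  constructor
  · refine le_ciInf fun i => ?_
    have := (hbound i).1
    linarith [hfrac]
  · refine ciSup_le fun i => ?_
    have := (hbound i).2
    linarith [hfrac]
end
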